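/- arXiv:2106.08305 — 7 statements merged into one kernel-verified Lean document; each statement's English description precedes it below -/
import Mathlib

section
/- If X satisfies the recursive max-linear structural equations X = C ⊙ X ∨ Z for a coefficient matrix C supported on a DAG and a vector Z with positive entries, then X = C* ⊙ Z, where C* is the Kleene star of C. Conversely, X = C* ⊙ Z satisfies X = C ⊙ X ∨ Z. -/
/-!
Writing `T x = C ⊙ x`, the map `T` preserves `⊔` and `0`, so unrolling the equation
`X = T X ⊔ Z` gives `X = Tᵐ X ⊔ ⨆_{k<m} Tᵏ Z` for every `m`, and `C* ⊙ Z = ⨆_{k<n} Tᵏ Z`.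
Because `C` is supported on a DAG, `Tⁿ = 0`: a nonzero entry of `Tᵏ x` at `i` needs a path of
length `k` ending at `i`, which forces `k` below the number of ancestors of `i`. Hence both
directions reduce to the identity `T (⨆_{k<n} Tᵏ Z) ⊔ Z = ⨆_{k<n+1} Tᵏ Z = ⨆_{k<n} Tᵏ Z`.
-/

open Finset

noncomputable def tropMul {n : ℕ} (A B : Matrix (Fin n) (Fin n) NNReal) :
    Matrix (Fin n) (Fin n) NNReal :=
  fun i j => univ.sup fun l => A i l * B l j

noncomputable def tropPow {n : ℕ} (A : Matrix (Fin n) (Fin n) NNReal) :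
    ℕ → Matrix (Fin n) (Fin n) NNReal
  | 0 => fun i j => if i = j then 1 else 0
  | k + 1 => tropMul A (tropPow A k)

noncomputable def kleene {n : ℕ} (A : Matrix (Fin n) (Fin n) NNReal) :
    Matrix (Fin n) (Fin n) NNReal :=
  fun i j => (Finset.range n).sup fun k => tropPow A k i j


/-- Tropical matrix-vector product. -/
noncomputable def tropMulVec {n : ℕ} (A : Matrix (Fin n) (Fin n) NNReal)
    (x : Fin n → NNReal) : Fin n → NNReal :=
  fun i => univ.sup fun j => A i j * x j

namespace SupBotHom

variable {α : Type*} [SemilatticeSup α] [OrderBot α] (f : SupBotHom α α)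

theorem sup_range_succ_iterate (z : α) (m : ℕ) :
    (range (m + 1)).sup (fun k => f^[k] z) = f ((range m).sup fun k => f^[k] z) ⊔ z := by
  rw [map_finset_sup, range_add_one', sup_insert, sup_map, sup_comm]
  exact congrArg (· ⊔ z) (sup_congr rfl fun k _ => Function.iterate_succ_apply' f k z)

theorem eq_iterate_sup_of_eq_sup {x z : α} (hx : x = f x ⊔ z) (m : ℕ) :
    x = f^[m] x ⊔ (range m).sup fun k => f^[k] z := by
  induction m with
  | zero => simp
  | succ m ih =>
    calc x = f x ⊔ z := hx
      _ = f (f^[m] x ⊔ (range m).sup fun k => f^[k] z) ⊔ z := by rw [← ih]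
      _ = _ := by rw [map_sup, sup_assoc, ← sup_range_succ_iterate, Function.iterate_succ_apply']

theorem eq_sup_iff_eq_sup_iterate {n : ℕ} (hf : ∀ x, f^[n] x = ⊥) (x z : α) :
    x = f x ⊔ z ↔ x = (range n).sup fun k => f^[k] z := by
  constructor
  · intro hx
    simpa [hf] using f.eq_iterate_sup_of_eq_sup hx n
  · rintro rfl
    rw [← sup_range_succ_iterate, range_add_one, sup_insert, hf, bot_sup_eq]

end SupBotHom

section Tropical

variable {n : ℕ}

theorem tropMulVec_sup (C : Matrix (Fin n) (Fin n) NNReal) (x y : Fin n → NNReal) :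
    tropMulVec C (x ⊔ y) = tropMulVec C x ⊔ tropMulVec C y := by
  funext i
  simp only [tropMulVec, Pi.sup_apply, NNReal.mul_sup]
  exact sup_sup

noncomputable def tropMulVecHom (C : Matrix (Fin n) (Fin n) NNReal) :
    SupBotHom (Fin n → NNReal) (Fin n → NNReal) where
  toFun := tropMulVec C
  map_sup' := tropMulVec_sup C
  map_bot' := by funext i; simp [tropMulVec]

theorem tropMulVec_tropMul (A B : Matrix (Fin n) (Fin n) NNReal) (z : Fin n → NNReal) :
    tropMulVec (tropMul A B) z = tropMulVec A (tropMulVec B z) := by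
  funext i
  simp only [tropMulVec, tropMul, NNReal.finset_sup_mul, NNReal.mul_finset_sup, mul_assoc]
  exact Finset.sup_comm _ _ _

theorem tropMulVec_tropPow (C : Matrix (Fin n) (Fin n) NNReal) (k : ℕ) (z : Fin n → NNReal) :
    tropMulVec (tropPow C k) z = (tropMulVec C)^[k] z := by
  induction k with
  | zero =>
    funext i
    refine le_antisymm (Finset.sup_le fun j _ => ?_) (le_sup_of_le (mem_univ i) (by simp [tropPow]))
    by_cases hij : i = j <;> simp [tropPow, hij]
  | succ k ih => rw [tropPow, tropMulVec_tropMul, ih, Function.iterate_succ_apply']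

theorem tropMulVec_kleene (C : Matrix (Fin n) (Fin n) NNReal) (z : Fin n → NNReal) :
    tropMulVec (kleene C) z = (range n).sup fun k => (tropMulVec C)^[k] z := by
  funext i
  simp only [tropMulVec, kleene, NNReal.finset_sup_mul, Finset.sup_apply, ← tropMulVec_tropPow]
  exact Finset.sup_comm _ _ _

theorem exists_ne_zero_of_tropMulVec_ne_zero {C : Matrix (Fin n) (Fin n) NNReal}
    {x : Fin n → NNReal} {i : Fin n} (h : tropMulVec C x i ≠ 0) :
    ∃ j, C i j ≠ 0 ∧ x j ≠ 0 := by
  obtain ⟨j, -, hj⟩ : ∃ j ∈ univ, C i j * x j ≠ 0 := by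
    simpa [tropMulVec, ← bot_eq_zero', Finset.sup_eq_bot_iff] using h
  exact ⟨j, left_ne_zero_of_mul hj, right_ne_zero_of_mul hj⟩

open Relation in
theorem lt_ncard_ancestors_of_iterate_tropMulVec_ne_zero {E : Fin n → Fin n → Prop}
    (hacyc : ∀ i, ¬ TransGen E i i) {C : Matrix (Fin n) (Fin n) NNReal}
    (hsupp : ∀ i j, C i j ≠ 0 → E j i) (x : Fin n → NNReal) :
    ∀ k i, (tropMulVec C)^[k] x i ≠ 0 → k < {j | ReflTransGen E j i}.ncard
  | 0, i, _ => (Set.ncard_pos).2 ⟨i, ReflTransGen.refl⟩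
  | k + 1, i, h => by
    rw [Function.iterate_succ_apply'] at h
    obtain ⟨j, hCij, hj⟩ := exists_ne_zero_of_tropMulVec_ne_zero h
    have hji : E j i := hsupp i j hCij
    calc k + 1 ≤ {l | ReflTransGen E l j}.ncard :=
          lt_ncard_ancestors_of_iterate_tropMulVec_ne_zero hacyc hsupp x k j hj
      _ < {l | ReflTransGen E l i}.ncard :=
          Set.ncard_lt_ncard ⟨fun l hl => hl.tail hji,
            fun hsub => hacyc i (TransGen.tail' (hsub ReflTransGen.refl) hji)⟩

theorem iterate_tropMulVec_eq_zero {E : Fin n → Fin n → Prop}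
    (hacyc : ∀ i, ¬ Relation.TransGen E i i) {C : Matrix (Fin n) (Fin n) NNReal}
    (hsupp : ∀ i j, C i j ≠ 0 → E j i) (x : Fin n → NNReal) :
    (tropMulVec C)^[n] x = 0 := by
  funext i
  by_contra h
  have hlt := lt_ncard_ancestors_of_iterate_tropMulVec_ne_zero hacyc hsupp x n i h
  have hle : {j | Relation.ReflTransGen E j i}.ncard ≤ n := by
    simpa using Set.ncard_le_card {j | Relation.ReflTransGen E j i}
  omega

end Tropical

theorem maxLinear_solution_general {n : ℕ} (E : Fin n → Fin n → Prop)
    (hacyc : ∀ i, ¬ Relation.TransGen E i i)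
    (C : Matrix (Fin n) (Fin n) NNReal)
    (hsupp : ∀ i j, C i j ≠ 0 → E j i)
    (X Z : Fin n → NNReal) :
    (∀ i, X i = max (tropMulVec C X i) (Z i)) ↔ X = tropMulVec (kleene C) Z := by
  rw [tropMulVec_kleene]
  exact funext_iff.symm.trans <|
    (tropMulVecHom C).eq_sup_iff_eq_sup_iterate (iterate_tropMulVec_eq_zero hacyc hsupp) X Z

/-- For `C` supported on a DAG and `Z` positive, `X` satisfies the
recursive max-linear structural equations `X = C ⊙ X ∨ Z` if and only if `X = C* ⊙ Z`. -/
theorem maxLinear_solution {n : ℕ} (E : Fin n → Fin n → Prop)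
    (hacyc : ∀ i, ¬ Relation.TransGen E i i)
    (C : Matrix (Fin n) (Fin n) NNReal)
    (hsupp : ∀ i j, C i j ≠ 0 → E j i)
    (X Z : Fin n → NNReal) (hZ : ∀ i, 0 < Z i) :
    (∀ i, X i = max (tropMulVec C X i) (Z i)) ↔ X = tropMulVec (kleene C) Z :=
  maxLinear_solution_general E hacyc C hsupp X Z
end

section
/- Let G and H be DAGs on [n] that are Markov equivalent under d-separation (i.e., have the same skeleton and the same unshielded colliders), let K ⊆ [n], and suppose i → j is an edge of the conditional reachability DAG G*_K. Then at least one of the following holds: (1) i → j is an edge of H*_K; (2) j → i is an edge of H*_K; (3) there exists ℓ ∈ [n] with both ℓ → i and ℓ → j edges of H*_K. -/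
/-- Edge `i → j` of the conditional reachability DAG `G*_K`: there is a directed path
from `i` to `j` in `E` none of whose internal vertices lies in `K`. -/
def ReachEdge {n : ℕ} (E : Fin n → Fin n → Prop) (K : Set (Fin n)) (i j : Fin n) : Prop :=
  ∃ p : List (Fin n), p.Chain' E ∧ p.head? = some i ∧ p.getLast? = some j ∧
    2 ≤ p.length ∧ ∀ v ∈ (p.drop 1).dropLast, v ∉ K


/-- `E` and `F` have the same skeleton. -/
def SameSkeleton {n : ℕ} (E F : Fin n → Fin n → Prop) : Prop :=
  ∀ i j, (E i j ∨ E j i) ↔ (F i j ∨ F j i)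

/-- `(i, k, j)` is an unshielded collider: `i → k ← j` with `i, j` nonadjacent. -/
def UnshieldedCollider {n : ℕ} (E : Fin n → Fin n → Prop) (i k j : Fin n) : Prop :=
  E i k ∧ E j k ∧ i ≠ j ∧ ¬(E i j ∨ E j i)


/-
Take an `E`-path from `i` to `j` whose interior avoids `K` and read it in `F`: every step is
still an edge of the common skeleton. If two consecutive `F`-edges collide at an interior
vertex `b` of the path `a → b → c`, the collider must be shielded, since `E` has no collider
there; acyclicity of `E` then orients the shielding edge as `a → c`, and dropping `b` gives a
shorter path of the same kind. A path with no `F`-collider is a trek: it runs backwards along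
`F` up to its first forward step and forwards from there on, which yields one of the three
alternatives.
-/

section Reachability

variable {n : ℕ}

/-- A path is encoded by its vertex sequence `v : ℕ → Fin n`, of which only
`v 0, …, v m` matter. -/
def IsAvoidingPath (R : Fin n → Fin n → Prop) (K : Set (Fin n)) (v : ℕ → Fin n) (m : ℕ) :
    Prop :=
  (∀ t < m, R (v t) (v (t + 1))) ∧ ∀ t, 0 < t → t < m → v t ∉ K

/-- `i` and `j` are joined in `R*_K` by a trek with at most one edge on each side. -/
def ReachTrek (R : Fin n → Fin n → Prop) (K : Set (Fin n)) (i j : Fin n) : Prop :=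
  ReachEdge R K i j ∨ ReachEdge R K j i ∨ ∃ l, ReachEdge R K l i ∧ ReachEdge R K l j

section Paths

variable {R : Fin n → Fin n → Prop} {K : Set (Fin n)} {v : ℕ → Fin n} {a b : ℕ}

lemma reachEdge_of_chain (hab : a < b) (hR : ∀ s, a ≤ s → s < b → R (v s) (v (s + 1)))
    (hK : ∀ s, a < s → s < b → v s ∉ K) : ReachEdge R K (v a) (v b) := by
  refine ⟨(List.range (b - a + 1)).map (fun s => v (a + s)), ?_, ?_, ?_, ?_, ?_⟩
  · change List.IsChain R _
    rw [List.isChain_iff_getElem]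
    intro s hs
    simp only [List.length_map, List.length_range] at hs
    simp only [List.getElem_map, List.getElem_range]
    exact hR (a + s) (by omega) (by omega)
  · rw [List.head?_eq_getElem?, List.getElem?_eq_getElem (by simp)]
    simp
  · rw [List.getLast?_eq_getElem?, List.getElem?_eq_getElem (by simp)]
    simp only [List.length_map, List.length_range, List.getElem_map, List.getElem_range]
    congr 2
    omega
  · simp only [List.length_map, List.length_range]
    omega
  · intro x hx
    obtain ⟨k, hk, rfl⟩ := List.mem_iff_getElem.mp hx
    simp only [List.length_dropLast, List.length_drop, List.length_map, List.length_range] at hk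
    rw [List.getElem_dropLast, List.getElem_drop, List.getElem_map, List.getElem_range]
    exact hK _ (by omega) (by omega)

lemma reachEdge_of_reverse_chain (hab : a < b)
    (hR : ∀ s, a ≤ s → s < b → R (v (s + 1)) (v s))
    (hK : ∀ s, a < s → s < b → v s ∉ K) : ReachEdge R K (v b) (v a) := by
  have h := reachEdge_of_chain (R := R) (K := K) (v := fun s => v (a + b - s)) hab
    (fun s hs hsb => by
      obtain ⟨r, hr⟩ : ∃ r, a + b - s = r + 1 := ⟨a + b - s - 1, by omega⟩
      have hr' : a + b - (s + 1) = r := by omega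
      simp only [hr, hr']
      exact hR r (by omega) (by omega))
    (fun s hs hsb => hK _ (by omega) (by omega))
  simpa only [Nat.add_sub_cancel, Nat.add_sub_cancel_left] using h

lemma ReachEdge.exists_isAvoidingPath {i j : Fin n} (h : ReachEdge R K i j) :
    ∃ m v, 0 < m ∧ v 0 = i ∧ v m = j ∧ IsAvoidingPath R K v m := by
  obtain ⟨p, hch, hhd, hlast, hlen, hint⟩ := h
  rw [List.head?_eq_getElem?, List.getElem?_eq_getElem (by omega), Option.some_inj] at hhd
  rw [List.getLast?_eq_getElem?, List.getElem?_eq_getElem (by omega), Option.some_inj] at hlast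
  change List.IsChain R p at hch
  rw [List.isChain_iff_getElem] at hch
  refine ⟨p.length - 1, fun t => p.getD t i, by omega, ?_, ?_, ?_, ?_⟩
  · simp only [List.getD_eq_getElem _ _ (show 0 < p.length by omega), hhd]
  · simp only [List.getD_eq_getElem _ _ (show p.length - 1 < p.length by omega), hlast]
  · intro t ht
    simp only [List.getD_eq_getElem _ _ (show t < p.length by omega),
      List.getD_eq_getElem _ _ (show t + 1 < p.length by omega)]
    exact hch t (by omega)
  · intro t ht0 htm
    simp only [List.getD_eq_getElem _ _ (show t < p.length by omega)]
    apply hint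
    refine List.mem_iff_getElem.mpr ⟨t - 1, by simp; omega, ?_⟩
    rw [List.getElem_dropLast, List.getElem_drop]
    congr 1
    omega

lemma IsAvoidingPath.eraseIdx {m t : ℕ} (h : IsAvoidingPath R K v (m + 1)) (ht : t < m)
    (hshort : R (v t) (v (t + 2))) :
    IsAvoidingPath R K (fun s => if s ≤ t then v s else v (s + 1)) m := by
  refine ⟨fun s hs => ?_, fun s hs0 hsm => ?_⟩
  · rcases Nat.lt_trichotomy s t with h' | rfl | h'
    · simpa only [if_pos h'.le, if_pos (show s + 1 ≤ t by omega)] using h.1 s (by omega)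
    · simpa only [le_refl, if_true, if_neg (show ¬ s + 1 ≤ s by omega)] using hshort
    · simpa only [if_neg (show ¬ s ≤ t by omega), if_neg (show ¬ s + 1 ≤ t by omega)]
        using h.1 (s + 1) (by omega)
  · beta_reduce
    split
    · exact h.2 s hs0 (by omega)
    · exact h.2 (s + 1) (by omega) (by omega)

end Paths

lemma reachTrek_of_no_collider {R : Fin n → Fin n → Prop} {K : Set (Fin n)} {v : ℕ → Fin n}
    {m : ℕ} (hm : 0 < m) (hadj : ∀ s < m, R (v s) (v (s + 1)) ∨ R (v (s + 1)) (v s))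
    (hcol : ∀ s, s + 1 < m → ¬ (R (v s) (v (s + 1)) ∧ R (v (s + 2)) (v (s + 1))))
    (hK : ∀ s, 0 < s → s < m → v s ∉ K) : ReachTrek R K (v 0) (v m) := by
  classical
  have hex : ∃ t, m ≤ t ∨ R (v t) (v (t + 1)) := ⟨m, .inl le_rfl⟩
  set t₀ := Nat.find hex
  have ht₀m : t₀ ≤ m := Nat.find_min' hex (.inl le_rfl)
  have hback : ∀ s, 0 ≤ s → s < t₀ → R (v (s + 1)) (v s) := fun s _ hs => by
    have := Nat.find_min hex hs
    push Not at this
    exact (hadj s this.1).resolve_left this.2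
  have hfwd : ∀ s, t₀ ≤ s → s < m → R (v s) (v (s + 1)) := by
    intro s hs
    induction s, hs using Nat.le_induction with
    | base => exact fun h => (Nat.find_spec hex).resolve_left (by omega)
    | succ s _ ih =>
      exact fun h => (hadj (s + 1) h).resolve_right fun h' => hcol s h ⟨ih (by omega), h'⟩
  have hK' (a b : ℕ) (hb : b ≤ m) : ∀ s, a < s → s < b → v s ∉ K :=
    fun s hs hsb => hK s (by omega) (by omega)
  rcases Nat.eq_zero_or_pos t₀ with h0 | h0
  · exact .inl (reachEdge_of_chain hm (fun s _ => hfwd s (by omega)) (hK' 0 m le_rfl))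
  rcases ht₀m.eq_or_lt with hm' | hm'
  · exact .inr (.inl (reachEdge_of_reverse_chain hm (fun s _ hs => hback s (by omega) (by omega))
      (hK' 0 m le_rfl)))
  exact .inr (.inr ⟨v t₀, reachEdge_of_reverse_chain h0 hback (hK' 0 t₀ ht₀m),
    reachEdge_of_chain hm' hfwd (hK' t₀ m le_rfl)⟩)

section MarkovEquivalent

variable {E F : Fin n → Fin n → Prop} (hE : ∀ i, ¬ Relation.TransGen E i i)
  (hskel : SameSkeleton E F)
  (huc : ∀ i k j, UnshieldedCollider E i k j ↔ UnshieldedCollider F i k j)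
include hE hskel huc

lemma edge_of_chain_of_collider {a b c : Fin n} (hab : E a b) (hbc : E b c) (hFab : F a b)
    (hFcb : F c b) : E a c := by
  have hne : a ≠ c := by
    rintro rfl
    exact hE a (.tail (.single hab) hbc)
  have hadj : E a c ∨ E c a := by
    by_contra hno
    have hcb : E c b := ((huc a b c).mpr ⟨hFab, hFcb, hne, (hskel a c).not.mp hno⟩).2.1
    exact hE b (.tail (.single hbc) hcb)
  exact hadj.resolve_right fun hca => hE a (.tail (.tail (.single hab) hbc) hca)

lemma reachTrek_of_isAvoidingPath {K : Set (Fin n)} {m : ℕ} {v : ℕ → Fin n} (hm : 0 < m)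
    (hv : IsAvoidingPath E K v m) : ReachTrek F K (v 0) (v m) := by
  induction m using Nat.strong_induction_on generalizing v with
  | _ m IH =>
  by_cases hcol : ∃ t, t + 1 < m ∧ F (v t) (v (t + 1)) ∧ F (v (t + 2)) (v (t + 1))
  · obtain ⟨t, htm, hFab, hFcb⟩ := hcol
    obtain ⟨m, rfl⟩ : ∃ m', m = m' + 1 := ⟨m - 1, by omega⟩
    have hshort := edge_of_chain_of_collider hE hskel huc (hv.1 t (by omega)) (hv.1 (t + 1) htm)
      hFab hFcb
    have := IH m (by omega) (by omega) (hv.eraseIdx (by omega) hshort)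
    simpa only [Nat.zero_le, if_true, if_neg (show ¬ m ≤ t by omega)] using this
  · push Not at hcol
    exact reachTrek_of_no_collider hm (fun s hs => (hskel _ _).mp (.inl (hv.1 s hs)))
      (fun s hs h => hcol s hs h.1 h.2) hv.2

end MarkovEquivalent

end Reachability

theorem reachEdge_surgery_general {n : ℕ} (E F : Fin n → Fin n → Prop)
    (hE : ∀ i, ¬ Relation.TransGen E i i)
    (hskel : SameSkeleton E F)
    (huc : ∀ i k j, UnshieldedCollider E i k j ↔ UnshieldedCollider F i k j)
    (K : Set (Fin n)) (i j : Fin n) (hij : ReachEdge E K i j) :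
    ReachEdge F K i j ∨ ReachEdge F K j i ∨
      ∃ l : Fin n, ReachEdge F K l i ∧ ReachEdge F K l j := by
  obtain ⟨m, v, hm, rfl, rfl, hv⟩ := hij.exists_isAvoidingPath
  exact reachTrek_of_isAvoidingPath hE hskel huc hm hv

/-- Let `E` and `F` be DAGs that are Markov equivalent under
d-separation (same skeleton and same unshielded colliders, by Verma–Pearl), let `K` be
a conditioning set, and suppose `i → j` is an edge of `E*_K`. Then `i → j ∈ F*_K`, or
`j → i ∈ F*_K`, or `i` and `j` have a common parent `ℓ` in `F*_K`. -/
theorem reachEdge_surgery {n : ℕ} (E F : Fin n → Fin n → Prop)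
    (hE : ∀ i, ¬ Relation.TransGen E i i) (hF : ∀ i, ¬ Relation.TransGen F i i)
    (hskel : SameSkeleton E F)
    (huc : ∀ i k j, UnshieldedCollider E i k j ↔ UnshieldedCollider F i k j)
    (K : Set (Fin n)) (i j : Fin n) (hij : ReachEdge E K i j) :
    ReachEdge F K i j ∨ ReachEdge F K j i ∨
      ∃ l : Fin n, ReachEdge F K l i ∧ ReachEdge F K l j :=
  reachEdge_surgery_general E F hE hskel huc K i j hij
end

section
/- If two DAGs G and H on [n] have the same skeleton and the same unshielded colliders, then for every K ⊆ [n] and every pair of vertices i, j, there is a *-connecting path between i and j given K in G if and only if there is one in H. -/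
/-- A walk in the skeleton of the digraph `E`: consecutive vertices are adjacent. -/
def IsWalk {n : ℕ} (E : Fin n → Fin n → Prop) (p : List (Fin n)) : Prop :=
  p.Chain' fun a b => E a b ∨ E b a

/-- Ancestors of the set `K` (including `K` itself): vertices with a directed path
into `K`. -/
def ancSet {n : ℕ} (E : Fin n → Fin n → Prop) (K : Set (Fin n)) : Set (Fin n) :=
  {v | ∃ k ∈ K, Relation.ReflTransGen E v k}

/-- A path (as a list of vertices) is d-connecting given `K` if it is a walk in the
skeleton, every collider on it lies in `K ∪ an(K)`, and no non-collider on it lies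
in `K`. -/
def DConnecting {n : ℕ} (E : Fin n → Fin n → Prop) (K : Set (Fin n))
    (p : List (Fin n)) : Prop :=
  IsWalk E p ∧
  ∀ a b c : Fin n, [a, b, c] <:+: p →
    ((E a b ∧ E c b) → b ∈ ancSet E K) ∧ (¬(E a b ∧ E c b) → b ∉ K)

open Classical in
/-- The number of colliders on a path. -/
noncomputable def colliderCount {n : ℕ} (E : Fin n → Fin n → Prop) :
    List (Fin n) → ℕ
  | a :: b :: c :: rest =>
      (if E a b ∧ E c b then 1 else 0) + colliderCount E (b :: c :: rest)
  | _ => 0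

/-- A path is *-connecting given `K` if it is d-connecting given `K` and contains at
most one collider. -/
def StarConnecting {n : ℕ} (E : Fin n → Fin n → Prop) (K : Set (Fin n))
    (p : List (Fin n)) : Prop :=
  DConnecting E K p ∧ colliderCount E p ≤ 1

/-- `i` and `j` are d-connected given `K`. -/
def DConn {n : ℕ} (E : Fin n → Fin n → Prop) (K : Set (Fin n)) (i j : Fin n) : Prop :=
  ∃ p : List (Fin n), p.head? = some i ∧ p.getLast? = some j ∧ 2 ≤ p.length ∧
    DConnecting E K p

/-- `i` and `j` are *-connected given `K`. -/
def StarConn {n : ℕ} (E : Fin n → Fin n → Prop) (K : Set (Fin n)) (i j : Fin n) : Prop :=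
  ∃ p : List (Fin n), p.head? = some i ∧ p.getLast? = some j ∧ 2 ≤ p.length ∧
    StarConnecting E K p

/-- `K` d-separates `I` and `J`. -/
def DSep {n : ℕ} (E : Fin n → Fin n → Prop) (I J K : Set (Fin n)) : Prop :=
  ∀ i ∈ I, ∀ j ∈ J, ¬ DConn E K i j

/-- `K` *-separates `I` and `J`. -/
def StarSep {n : ℕ} (E : Fin n → Fin n → Prop) (I J K : Set (Fin n)) : Prop :=
  ∀ i ∈ I, ∀ j ∈ J, ¬ StarConn E K i j

/-!
For a DAG and endpoints outside `K`, a *-connecting path exists exactly when `i` and `j` are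
joined by a trek avoiding `K`, or by two such treks ending in the parents `a`, `b` of a collider
`a → c ← b` with `c ∈ an(K)`. Treks survive the passage to a Markov equivalent DAG: on a shortest
collider-free walk every triple is unshielded, and an unshielded triple is a collider in both
graphs or in neither. A shielded collider can be moved up to one of its parents until it becomes
unshielded (or a trek appears); an unshielded collider is common to both graphs, and sliding it
along a shortest directed path from `c` into `K` keeps a collider in `an(K)` in the other graph.
-/

theorem List.infix_append_overlap {α : Type*} {l l₁ l₂ : List α} {a b : α} (hl : l.length ≤ 3)
    (h : l <:+: l₁ ++ a :: b :: l₂) : l <:+: l₁ ++ [a, b] ∨ l <:+: a :: b :: l₂ := by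
  induction l₁ with
  | nil => exact .inr h
  | cons x l₁ ih =>
    rcases List.infix_cons_iff.1 h with hp | h
    · refine .inl (List.prefix_of_prefix_length_le hp ⟨l₂, by simp⟩ ?_).isInfix
      simp only [List.length_cons, List.length_append, List.length_nil]
      omega
    · exact (ih h).imp_left List.infix_cons

theorem List.mem_of_triple_infix_cons {α : Type*} {l : List α} {a b c x : α}
    (h : [a, b, c] <:+: x :: l) : b ∈ l := by
  rcases List.infix_cons_iff.1 h with ⟨t, ht⟩ | h
  · simp only [List.cons_append, List.nil_append, List.cons.injEq] at ht
    simp [← ht.2]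
  · exact h.subset (by simp)

theorem List.mem_of_triple_infix_concat {α : Type*} {l : List α} {a b c x : α}
    (h : [a, b, c] <:+: l ++ [x]) : b ∈ l :=
  List.mem_reverse.1 (List.mem_of_triple_infix_cons (a := c) (c := a) (by simpa using h.reverse))

theorem List.exists_middle_or_getLast {α : Type*} :
    ∀ {l : List α} {x u : α}, u ∈ l → (∃ a c, [a, u, c] <:+: x :: l) ∨ l.getLast? = some u
  | [v], _, _, hu => .inr (by simp_all)
  | v :: w :: l, x, u, hu => by
    rcases List.mem_cons.1 hu with rfl | hu
    · exact .inl ⟨x, w, ⟨[], l, rfl⟩⟩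
    · rcases List.exists_middle_or_getLast (x := v) hu with ⟨a, c, ht⟩ | hl
      · exact .inl ⟨a, c, List.infix_cons ht⟩
      · exact .inr (by rw [List.getLast?_cons_cons, hl])

section Digraph

variable {n : ℕ} {E F : Fin n → Fin n → Prop} {K : Set (Fin n)} {a b c d x y z : Fin n}

def IsAcyclic (E : Fin n → Fin n → Prop) : Prop :=
  ∀ i, ¬Relation.TransGen E i i

theorem IsAcyclic.asymm (hE : IsAcyclic E) (hab : E a b) : ¬E b a :=
  fun hba => hE a ((Relation.TransGen.single hab).tail hba)

theorem IsAcyclic.not_cycle₃ (hE : IsAcyclic E) (hab : E a b) (hbc : E b c) : ¬E c a :=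
  fun hca => hE a (((Relation.TransGen.single hab).tail hbc).tail hca)

theorem IsAcyclic.wellFounded (hE : IsAcyclic E) : WellFounded E :=
  haveI : Std.Irrefl (Relation.TransGen E) := ⟨hE⟩
  Subrelation.wf Relation.TransGen.single (Finite.wellFounded_of_trans_of_irrefl _)

def MarkovEquiv (E F : Fin n → Fin n → Prop) : Prop :=
  SameSkeleton E F ∧ ∀ i k j, UnshieldedCollider E i k j ↔ UnshieldedCollider F i k j

theorem MarkovEquiv.symm (h : MarkovEquiv E F) : MarkovEquiv F E :=
  ⟨fun a b => (h.1 a b).symm, fun a b c => (h.2 a b c).symm⟩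

theorem MarkovEquiv.not_adj (h : MarkovEquiv E F) (hab : ¬(E a b ∨ E b a)) : ¬(F a b ∨ F b a) :=
  fun hF => hab ((h.1 a b).2 hF)

/-- `a` must be adjacent to `d`, else `a → c ← d` would be an unshielded collider of `F` but
not of `E`. -/
theorem MarkovEquiv.edge_of_reversed_edge (h : MarkovEquiv E F) (hE : IsAcyclic E)
    (hac : E a c) (hac' : F a c) (hcd : E c d) (hdc : F d c) : E a d := by
  have had : a ≠ d := by
    rintro rfl
    exact hE.asymm hac hcd
  have hadj : E a d ∨ E d a := by
    by_contra hna
    exact hE.asymm hcd ((h.2 a c d).2 ⟨hac', hdc, had, h.not_adj hna⟩).2.1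
  exact hadj.resolve_right (hE.not_cycle₃ hac hcd)

def AvoidingPath (E : Fin n → Fin n → Prop) (K : Set (Fin n)) : Fin n → Fin n → Prop :=
  Relation.ReflTransGen fun a b => E a b ∧ b ∉ K

theorem AvoidingPath.not_mem (h : AvoidingPath E K x y) (hx : x ∉ K) : y ∉ K := by
  induction h with
  | refl => exact hx
  | tail _ hst _ => exact hst.2

def Trek (E : Fin n → Fin n → Prop) (K : Set (Fin n)) (x y : Fin n) : Prop :=
  ∃ t ∉ K, AvoidingPath E K t x ∧ AvoidingPath E K t y

namespace Trek

theorem refl (hx : x ∉ K) : Trek E K x x :=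
  ⟨x, hx, .refl, .refl⟩

theorem of_avoidingPath (hx : x ∉ K) (h : AvoidingPath E K x y) : Trek E K x y :=
  ⟨x, hx, .refl, h⟩

theorem symm (h : Trek E K x y) : Trek E K y x :=
  let ⟨t, ht, htx, hty⟩ := h
  ⟨t, ht, hty, htx⟩

theorem not_mem_right (h : Trek E K x y) : y ∉ K :=
  let ⟨_, ht, _, hty⟩ := h
  hty.not_mem ht

theorem trans_avoidingPath (h : Trek E K x y) (hyz : AvoidingPath E K y z) : Trek E K x z :=
  let ⟨t, ht, htx, hty⟩ := h
  ⟨t, ht, htx, hty.trans hyz⟩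

theorem tail (h : Trek E K x y) (hyz : E y z) (hz : z ∉ K) : Trek E K x z :=
  h.trans_avoidingPath (.single ⟨hyz, hz⟩)

theorem head (h : Trek E K y z) (hyx : E y x) (hx : x ∉ K) : Trek E K x z :=
  (h.symm.tail hyx hx).symm

theorem avoidingPath_or_parent (h : Trek E K x y) :
    AvoidingPath E K y x ∨ ∃ y', Trek E K x y' ∧ E y' y := by
  obtain ⟨t, ht, htx, hty⟩ := h
  rcases Relation.ReflTransGen.cases_tail hty with rfl | ⟨y', hty', hy'y, -⟩
  · exact .inl htx
  · exact .inr ⟨y', ⟨t, ht, htx, hty'⟩, hy'y⟩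

end Trek

def ColliderTrek (E : Fin n → Fin n → Prop) (K : Set (Fin n)) (x y : Fin n) : Prop :=
  ∃ a b c, Trek E K x a ∧ Trek E K y b ∧ E a c ∧ E b c ∧ c ∈ ancSet E K

end Digraph

section Walks

variable {n : ℕ} {E : Fin n → Fin n → Prop} {a b c p q u v w x : Fin n} {l s t : List (Fin n)}

def NoCollider (E : Fin n → Fin n → Prop) (l : List (Fin n)) : Prop :=
  ∀ a b c, [a, b, c] <:+: l → ¬(E a b ∧ E c b)

namespace NoCollider

theorem of_infix (h : NoCollider E l) (hs : s <:+: l) : NoCollider E s :=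
  fun a b c ht => h a b c (ht.trans hs)

theorem of_length_lt (hl : l.length < 3) : NoCollider E l :=
  fun a b c ht => absurd ht.length_le (by simp; omega)

theorem reverse (h : NoCollider E l) : NoCollider E l.reverse :=
  fun a b c ht hcol => h c b a (by simpa using ht.reverse) hcol.symm

theorem append_overlap (h₁ : NoCollider E (s ++ [u, v])) (h₂ : NoCollider E (u :: v :: t)) :
    NoCollider E (s ++ u :: v :: t) :=
  fun a b c ht => (List.infix_append_overlap (by simp) ht).elim (h₁ a b c) (h₂ a b c)

end NoCollider

theorem noCollider_cons_cons_cons :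
    NoCollider E (a :: b :: c :: l) ↔ ¬(E a b ∧ E c b) ∧ NoCollider E (b :: c :: l) := by
  refine ⟨fun h => ⟨h a b c ⟨[], l, rfl⟩, h.of_infix (List.infix_cons (List.infix_refl _))⟩, ?_⟩
  rintro ⟨habc, h⟩ x y z ht
  rcases List.infix_cons_iff.1 ht with ⟨r, hr⟩ | ht
  · simp only [List.cons_append, List.nil_append, List.cons.injEq] at hr
    obtain ⟨rfl, rfl, rfl, -⟩ := hr
    exact habc
  · exact h x y z ht

namespace NoCollider

theorem cons_of_edge (hE : IsAcyclic E) (h : NoCollider E (p :: l)) (hpx : E p x) :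
    NoCollider E (x :: p :: l) := by
  cases l with
  | nil => exact of_length_lt (by simp)
  | cons z l => exact noCollider_cons_cons_cons.2 ⟨fun hcol => hE.asymm hpx hcol.1, h⟩

/-- The only new triple `(u, w, z)` would close the cycle `u → w → v → u`. -/
theorem shortcut_front (hE : IsAcyclic E) (huv : E u v ∨ E v u) (hvw : E v w ∨ E w v)
    (h : NoCollider E (u :: v :: w :: t)) : NoCollider E (u :: w :: t) := by
  cases t with
  | nil => exact of_length_lt (by simp)
  | cons z t =>
    obtain ⟨huvw, h⟩ := noCollider_cons_cons_cons.1 h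
    obtain ⟨hvwz, h⟩ := noCollider_cons_cons_cons.1 h
    refine noCollider_cons_cons_cons.2 ⟨fun ⟨huw, hzw⟩ => ?_, h⟩
    have hwv : E w v := hvw.resolve_left fun hvw => hvwz ⟨hvw, hzw⟩
    have hvu : E v u := huv.resolve_left fun huv => huvw ⟨huv, hwv⟩
    exact hE.not_cycle₃ huw hwv hvu

theorem dropBacktrack_front (huv : E u v ∨ E v u) (h : NoCollider E (q :: u :: v :: u :: t)) :
    NoCollider E (q :: u :: t) := by
  cases t with
  | nil => exact of_length_lt (by simp)
  | cons z t =>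
    obtain ⟨hquv, h⟩ := noCollider_cons_cons_cons.1 h
    obtain ⟨huvu, h⟩ := noCollider_cons_cons_cons.1 h
    have hvu : E v u := huv.resolve_left fun huv => huvu ⟨huv, huv⟩
    exact noCollider_cons_cons_cons.2
      ⟨fun hcol => hquv ⟨hcol.1, hvu⟩, h.of_infix (List.infix_cons (List.infix_refl _))⟩

theorem shortcut (hE : IsAcyclic E) (huv : E u v ∨ E v u) (hvw : E v w ∨ E w v)
    (h : NoCollider E (s ++ u :: v :: w :: t)) : NoCollider E (s ++ u :: w :: t) := by
  refine append_overlap ?_ (shortcut_front hE huv hvw (h.of_infix List.infix_append_right))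
  have hrev : NoCollider E (w :: v :: u :: s.reverse) := by
    simpa using (h.of_infix (s := s ++ [u, v, w]) ⟨[], t, by simp⟩).reverse
  simpa using (shortcut_front hE hvw.symm huv.symm hrev).reverse

theorem dropBacktrack (huv : E u v ∨ E v u) (h : NoCollider E (s ++ u :: v :: u :: t)) :
    NoCollider E (s ++ u :: t) := by
  cases t with
  | nil => exact h.of_infix ⟨[], [v, u], by simp⟩
  | cons q t =>
    refine append_overlap ?_ (h.of_infix ⟨s ++ [u, v], [], by simp⟩)
    have hrev : NoCollider E (q :: u :: v :: u :: s.reverse) := by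
      simpa using (h.of_infix (s := s ++ [u, v, u, q]) ⟨[], t, by simp⟩).reverse
    simpa using (dropBacktrack_front huv hrev).reverse

end NoCollider

end Walks

section TrekWalks

variable {n : ℕ} {E : Fin n → Fin n → Prop} {K : Set (Fin n)} {p u v w x y : Fin n}
  {l m m' s : List (Fin n)}

structure IsTrekWalk (E : Fin n → Fin n → Prop) (K : Set (Fin n)) (l : List (Fin n))
    (x y : Fin n) : Prop where
  isWalk : IsWalk E l
  noCollider : NoCollider E l
  not_mem : ∀ v ∈ l, v ∉ K
  head_eq : l.head? = some x
  getLast_eq : l.getLast? = some y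

namespace IsTrekWalk

theorem singleton (hx : x ∉ K) : IsTrekWalk E K [x] x x :=
  ⟨List.isChain_singleton x, .of_length_lt (by simp), by simpa using hx, rfl, rfl⟩

theorem reverse (h : IsTrekWalk E K l x y) : IsTrekWalk E K l.reverse y x where
  isWalk := List.isChain_reverse.2 (h.isWalk.imp fun _ _ => Or.symm)
  noCollider := h.noCollider.reverse
  not_mem v hv := h.not_mem v (List.mem_reverse.1 hv)
  head_eq := by rw [List.head?_reverse, h.getLast_eq]
  getLast_eq := by rw [List.getLast?_reverse, h.head_eq]

theorem tail (h : IsTrekWalk E K (x :: v :: l) x y) : IsTrekWalk E K (v :: l) v y where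
  isWalk := h.isWalk.tail
  noCollider := h.noCollider.of_infix (List.infix_cons (List.infix_refl _))
  not_mem u hu := h.not_mem u (List.mem_cons_of_mem x hu)
  head_eq := rfl
  getLast_eq := by rw [← List.getLast?_cons_cons, h.getLast_eq]

theorem cons_of_edge (hE : IsAcyclic E) (h : IsTrekWalk E K l p y) (hpx : E p x) (hx : x ∉ K) :
    IsTrekWalk E K (x :: l) x y := by
  obtain ⟨l, rfl⟩ := List.head?_eq_some_iff.1 h.head_eq
  exact ⟨h.isWalk.cons_cons (.inr hpx), h.noCollider.cons_of_edge hE hpx,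
    List.forall_mem_cons.2 ⟨hx, h.not_mem⟩, rfl, by rw [List.getLast?_cons_cons, h.getLast_eq]⟩

theorem extend (hE : IsAcyclic E) (h : IsTrekWalk E K l p y) (hpx : AvoidingPath E K p x) :
    ∃ l', IsTrekWalk E K l' x y := by
  induction hpx with
  | refl => exact ⟨l, h⟩
  | tail _ hst ih =>
    obtain ⟨l', h'⟩ := ih
    exact ⟨_, h'.cons_of_edge hE hst.1 hst.2⟩

theorem avoidingPath_of_edge :
    ∀ {l : List (Fin n)} {x v : Fin n}, IsTrekWalk E K (x :: v :: l) x y → E x v →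
      AvoidingPath E K x y
  | [], x, v, h, hxv => by
    obtain rfl : v = y := by simpa using h.getLast_eq
    exact .single ⟨hxv, h.not_mem v (by simp)⟩
  | w :: l, x, v, h, hxv => by
    have hvw : E v w := (List.isChain_cons_cons.1 h.isWalk.tail).1.resolve_right
      fun hwv => (noCollider_cons_cons_cons.1 h.noCollider).1 ⟨hxv, hwv⟩
    exact .head ⟨hxv, h.not_mem v (by simp)⟩ (h.tail.avoidingPath_of_edge hvw)

theorem trek (h : IsTrekWalk E K l x y) : Trek E K x y := by
  obtain ⟨l, rfl⟩ := List.head?_eq_some_iff.1 h.head_eq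
  induction l generalizing x with
  | nil =>
    obtain rfl : x = y := by simpa using h.getLast_eq
    exact .refl (h.not_mem x (by simp))
  | cons v l ih =>
    rcases (List.isChain_cons_cons.1 h.isWalk).1 with hxv | hvx
    · exact .of_avoidingPath (h.not_mem x (by simp)) (h.avoidingPath_of_edge hxv)
    · exact (ih h.tail).head hvx (h.not_mem x (by simp))

theorem splice (h : IsTrekWalk E K (s ++ u :: m) x y) (hw : IsWalk E (u :: m'))
    (hnc : NoCollider E (s ++ u :: m')) (hsub : m' ⊆ m)
    (hlast : (u :: m').getLast? = (u :: m).getLast?) : IsTrekWalk E K (s ++ u :: m') x y where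
  isWalk := by
    have h' := List.IsChain.append_overlap (l₁ := s) (l₂ := [u])
      (h.isWalk.prefix ⟨m, by simp⟩) hw (List.cons_ne_nil _ _)
    simp only [List.append_assoc, List.singleton_append] at h'
    exact h'
  noCollider := hnc
  not_mem v hv := h.not_mem v (by
    simp only [List.mem_append, List.mem_cons] at hv ⊢
    tauto)
  head_eq := by simpa using h.head_eq
  getLast_eq := by rw [List.getLast?_append, hlast, ← List.getLast?_append, h.getLast_eq]

theorem exists_shorter_of_shielded (hE : IsAcyclic E) (h : IsTrekWalk E K l x y)
    (ht : [u, v, w] <:+: l) (hsh : u = w ∨ E u w ∨ E w u) :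
    ∃ l', l'.length < l.length ∧ IsTrekWalk E K l' x y := by
  obtain ⟨s, t, rfl⟩ := ht
  simp only [List.append_assoc, List.cons_append, List.nil_append] at h ⊢
  have hadj := h.isWalk.infix (l₁ := [u, v, w]) ⟨s, t, by simp⟩
  simp only [List.isChain_cons_cons, List.isChain_singleton, and_true] at hadj
  obtain ⟨huv, hvw⟩ := hadj
  rcases hsh with rfl | huw
  · refine ⟨s ++ u :: t, by simp, h.splice ?_ (h.noCollider.dropBacktrack huv) ?_ ?_⟩
    · exact h.isWalk.infix ⟨s ++ [u, v], [], by simp⟩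
    · intro z hz; simp [hz]
    · cases t <;> simp
  · refine ⟨s ++ u :: w :: t, by simp,
      h.splice ?_ (h.noCollider.shortcut hE huv hvw) ?_ ?_⟩
    · exact (h.isWalk.infix ⟨s ++ [u, v], [], by simp⟩).cons_cons huw
    · intro z hz; simp [hz]
    · cases t <;> simp

end IsTrekWalk

end TrekWalks

section TrekTransfer

variable {n : ℕ} {E F : Fin n → Fin n → Prop} {K : Set (Fin n)} {x y : Fin n}

theorem Trek.exists_isTrekWalk (hE : IsAcyclic E) (h : Trek E K x y) :
    ∃ l, IsTrekWalk E K l x y := by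
  obtain ⟨t, ht, htx, hty⟩ := h
  obtain ⟨l, hl⟩ := (IsTrekWalk.singleton ht).extend hE hty
  exact hl.reverse.extend hE htx

theorem IsTrekWalk.of_unshielded (hEF : MarkovEquiv E F) {l : List (Fin n)}
    (h : IsTrekWalk E K l x y) (hu : ∀ a b c, [a, b, c] <:+: l → ¬(a = c ∨ E a c ∨ E c a)) :
    IsTrekWalk F K l x y where
  isWalk := h.isWalk.imp fun a b => (hEF.1 a b).1
  noCollider a b c ht hcol := by
    have hac : a ≠ c ∧ ¬(E a c ∨ E c a) := not_or.1 (hu a b c ht)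
    have hE := (hEF.2 a b c).2 ⟨hcol.1, hcol.2, hac.1, hEF.not_adj hac.2⟩
    exact h.noCollider a b c ht ⟨hE.1, hE.2.1⟩
  not_mem := h.not_mem
  head_eq := h.head_eq
  getLast_eq := h.getLast_eq

/-- A shortest collider-free walk has only unshielded triples, and those keep their
(non-)collider status in a Markov equivalent graph. -/
theorem IsTrekWalk.trek_of_markovEquiv (hE : IsAcyclic E) (hEF : MarkovEquiv E F)
    {l : List (Fin n)} (h : IsTrekWalk E K l x y) : Trek F K x y := by
  by_cases hsh : ∃ a b c, [a, b, c] <:+: l ∧ (a = c ∨ E a c ∨ E c a)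
  · obtain ⟨a, b, c, ht, hac⟩ := hsh
    obtain ⟨l', hlen, h'⟩ := h.exists_shorter_of_shielded hE ht hac
    exact h'.trek_of_markovEquiv hE hEF
  · exact (h.of_unshielded hEF fun a b c ht hac => hsh ⟨a, b, c, ht, hac⟩).trek
termination_by l.length

theorem Trek.of_markovEquiv (hE : IsAcyclic E) (hEF : MarkovEquiv E F) (h : Trek E K x y) :
    Trek F K x y :=
  let ⟨_, hl⟩ := h.exists_isTrekWalk hE
  hl.trek_of_markovEquiv hE hEF

end TrekTransfer

section StarConnecting

variable {n : ℕ} {E : Fin n → Fin n → Prop} {K : Set (Fin n)} {p w x y i j : Fin n}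
  {l : List (Fin n)}

theorem colliderCount_le_cons (x : Fin n) (l : List (Fin n)) :
    colliderCount E l ≤ colliderCount E (x :: l) := by
  match l with
  | [] | [_] => exact Nat.zero_le _
  | _ :: _ :: _ =>
    rw [colliderCount]
    omega

theorem colliderCount_eq_zero_iff : ∀ {l : List (Fin n)}, colliderCount E l = 0 ↔ NoCollider E l
  | [] | [_] | [_, _] => iff_of_true rfl (.of_length_lt (by simp))
  | a :: b :: c :: l => by
    rw [colliderCount, noCollider_cons_cons_cons, ← colliderCount_eq_zero_iff]
    split_ifs with h <;> simp [h]

theorem colliderCount_append_cons_cons (s : List (Fin n)) (a b : Fin n) (t : List (Fin n)) :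
    colliderCount E (s ++ a :: b :: t) =
      colliderCount E (s ++ [a, b]) + colliderCount E (a :: b :: t) := by
  induction s with
  | nil => simp [colliderCount]
  | cons x s ih =>
    rcases s with _ | ⟨y, _ | ⟨z, s⟩⟩ <;>
      simp only [List.cons_append, List.nil_append, colliderCount] at ih ⊢ <;> omega

theorem DConnecting.tail (h : DConnecting E K (x :: l)) : DConnecting E K l :=
  ⟨h.1.tail, fun a b c ht => h.2 a b c (List.infix_cons ht)⟩

theorem DConnecting.isTrekWalk (h : DConnecting E K (p :: l)) (hnc : NoCollider E (p :: l))
    (hw : l.head? = some w) (hy : l.getLast? = some y) (hyK : y ∉ K) : IsTrekWalk E K l w y where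
  isWalk := h.1.tail
  noCollider := hnc.of_infix (List.infix_cons (List.infix_refl _))
  not_mem u hu := by
    rcases List.exists_middle_or_getLast (x := p) hu with ⟨a, c, ht⟩ | hu
    · exact (h.2 a u c ht).2 (hnc a u c ht)
    · exact Option.some_injective _ (hu.symm.trans hy) ▸ hyK
  head_eq := hw
  getLast_eq := hy

theorem DConnecting.avoidingPath_or_collider :
    ∀ {l : List (Fin n)} {x v : Fin n}, DConnecting E K (x :: v :: l) →
      colliderCount E (x :: v :: l) ≤ 1 → (v :: l).getLast? = some y → y ∉ K → E x v →
      AvoidingPath E K x y ∨ ∃ a b c, AvoidingPath E K x a ∧ Trek E K y b ∧ E a c ∧ E b c ∧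
        c ∈ ancSet E K
  | [], x, v, _, _, hy, hyK, hxv => by
    obtain rfl : v = y := by simpa using hy
    exact .inl (.single ⟨hxv, hyK⟩)
  | w :: l, x, v, hD, hc, hy, hyK, hxv => by
    rw [List.getLast?_cons_cons] at hy
    by_cases hwv : E w v
    · have hcol : E x v ∧ E w v := ⟨hxv, hwv⟩
      have hnc : NoCollider E (v :: w :: l) := by
        rw [colliderCount, if_pos hcol] at hc
        exact colliderCount_eq_zero_iff.1 (by omega)
      exact .inr ⟨x, w, v, .refl, (hD.tail.isTrekWalk hnc rfl hy hyK).trek.symm, hxv, hwv,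
        (hD.2 x v w ⟨[], l, rfl⟩).1 hcol⟩
    · have hvw : E v w := (List.isChain_cons_cons.1 hD.1.tail).1.resolve_right hwv
      have hvK : v ∉ K := (hD.2 x v w ⟨[], l, rfl⟩).2 fun hcol => hwv hcol.2
      rcases avoidingPath_or_collider hD.tail ((colliderCount_le_cons x _).trans hc) hy hyK hvw
        with h | ⟨a, b, c, hva, h⟩
      · exact .inl (.head ⟨hxv, hvK⟩ h)
      · exact .inr ⟨a, b, c, .head ⟨hxv, hvK⟩ hva, h⟩

theorem DConnecting.trek_or_colliderTrek (hE : IsAcyclic E) :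
    ∀ {l : List (Fin n)} {x : Fin n}, DConnecting E K (x :: l) → colliderCount E (x :: l) ≤ 1 →
      (x :: l).getLast? = some y → x ∉ K → y ∉ K → Trek E K x y ∨ ColliderTrek E K x y
  | [], x, _, _, hy, hx, _ => by
    obtain rfl : x = y := by simpa using hy
    exact .inl (.refl hx)
  | v :: l, x, hD, hc, hy, hx, hyK => by
    rw [List.getLast?_cons_cons] at hy
    rcases (List.isChain_cons_cons.1 hD.1).1 with hxv | hvx
    · rcases hD.avoidingPath_or_collider hc hy hyK hxv with h | ⟨a, b, c, hxa, h⟩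
      · exact .inl (.of_avoidingPath hx h)
      · exact .inr ⟨a, b, c, .of_avoidingPath hx hxa, h⟩
    · have hvK : v ∉ K := by
        cases l with
        | nil =>
          obtain rfl : v = y := Option.some.inj hy
          exact hyK
        | cons w l => exact (hD.2 x v w ⟨[], l, rfl⟩).2 fun hcol => hE.asymm hvx hcol.1
      rcases trek_or_colliderTrek hE hD.tail ((colliderCount_le_cons x _).trans hc) hy hvK hyK
        with h | ⟨a, b, c, hva, h⟩
      · exact .inl (h.head hvx hx)
      · exact .inr ⟨a, b, c, hva.head hvx hx, h⟩

theorem Trek.starConn (hE : IsAcyclic E) (hij : i ≠ j) (h : Trek E K i j) : StarConn E K i j := by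
  obtain ⟨l, hl⟩ := h.exists_isTrekWalk hE
  refine ⟨l, hl.head_eq, hl.getLast_eq, ?_, ⟨hl.isWalk, fun a b c ht =>
    ⟨fun hcol => absurd hcol (hl.noCollider a b c ht),
      fun _ => hl.not_mem b (ht.subset (by simp))⟩⟩,
    (colliderCount_eq_zero_iff.2 hl.noCollider).trans_le zero_le_one⟩
  match l, hl with
  | [], hl => exact absurd hl.head_eq (by simp)
  | [z], hl =>
    obtain rfl : z = i := Option.some.inj hl.head_eq
    exact absurd (Option.some.inj hl.getLast_eq) hij
  | _ :: _ :: _, _ => simp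

theorem ColliderTrek.starConn (hE : IsAcyclic E) (h : ColliderTrek E K i j) :
    StarConn E K i j := by
  obtain ⟨a, b, c, hia, hjb, hac, hbc, hc⟩ := h
  obtain ⟨A, hA⟩ := hia.exists_isTrekWalk hE
  obtain ⟨B, hB⟩ := hjb.symm.exists_isTrekWalk hE
  obtain ⟨A, rfl⟩ := List.getLast?_eq_some_iff.1 hA.getLast_eq
  obtain ⟨B, rfl⟩ := List.head?_eq_some_iff.1 hB.head_eq
  have hA' : NoCollider E (A ++ [a, c]) := by
    have : NoCollider E (a :: A.reverse) := by simpa using hA.noCollider.reverse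
    simpa using (this.cons_of_edge hE hac).reverse
  have hB' : NoCollider E (c :: b :: B) := hB.noCollider.cons_of_edge hE hbc
  refine ⟨A ++ a :: c :: b :: B, by simpa using hA.head_eq, by simpa using hB.getLast_eq,
    by simp only [List.length_append, List.length_cons]; omega,
    ⟨?_, fun x y z ht => ?_⟩, ?_⟩
  · have hw := List.IsChain.append_overlap (l₁ := A) (l₂ := [a]) hA.isWalk
      (hB.isWalk.cons_cons (.inr hbc) |>.cons_cons (.inl hac)) (List.cons_ne_nil _ _)
    simp only [List.append_assoc, List.singleton_append] at hw
    exact hw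
  · rcases List.infix_append_overlap (by simp) ht with ht | ht
    · exact ⟨fun hcol => absurd hcol (hA' x y z ht),
        fun _ => hA.not_mem y (List.mem_of_triple_infix_concat (by simpa using ht))⟩
    rcases List.infix_cons_iff.1 ht with ⟨r, hr⟩ | ht
    · simp only [List.cons_append, List.nil_append, List.cons.injEq] at hr
      obtain ⟨rfl, rfl, rfl, -⟩ := hr
      exact ⟨fun _ => hc, fun hn => absurd ⟨hac, hbc⟩ hn⟩
    · exact ⟨fun hcol => absurd hcol (hB' x y z ht),
        fun _ => hB.not_mem y (List.mem_of_triple_infix_cons ht)⟩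
  · rw [colliderCount_append_cons_cons, colliderCount_eq_zero_iff.2 hA', colliderCount,
      if_pos ⟨hac, hbc⟩, colliderCount_eq_zero_iff.2 hB']

theorem starConn_iff (hE : IsAcyclic E) (hij : i ≠ j) (hi : i ∉ K) (hj : j ∉ K) :
    StarConn E K i j ↔ Trek E K i j ∨ ColliderTrek E K i j := by
  refine ⟨fun ⟨p, hp, hpj, _, hD, hc⟩ => ?_,
    fun h => h.elim (Trek.starConn hE hij) (ColliderTrek.starConn hE)⟩
  obtain ⟨l, rfl⟩ := List.head?_eq_some_iff.1 hp
  exact hD.trek_or_colliderTrek hE hc hpj hi hj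

end StarConnecting

section ColliderTransfer

variable {n : ℕ} {E F : Fin n → Fin n → Prop} {K : Set (Fin n)} {i j : Fin n}

def UnshieldedColliderTrek (E : Fin n → Fin n → Prop) (K : Set (Fin n)) (i j : Fin n) : Prop :=
  ∃ a b c, Trek E K i a ∧ Trek E K j b ∧ UnshieldedCollider E a c b ∧ c ∈ ancSet E K

theorem UnshieldedColliderTrek.symm (h : UnshieldedColliderTrek E K i j) :
    UnshieldedColliderTrek E K j i :=
  let ⟨a, b, c, hia, hjb, ⟨hac, hbc, hab, hnadj⟩, hc⟩ := h
  ⟨b, a, c, hjb, hia, ⟨hbc, hac, hab.symm, fun h => hnadj h.symm⟩, hc⟩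

theorem mem_ancSet_of_edge {a c : Fin n} (hac : E a c) (hc : c ∈ ancSet E K) : a ∈ ancSet E K :=
  let ⟨k, hk, hck⟩ := hc
  ⟨k, hk, .head hac hck⟩

/-- Moving a shielded collider up to one of its parents terminates since `E` is well founded. -/
theorem ColliderTrek.trek_or_unshielded (hE : IsAcyclic E) (h : ColliderTrek E K i j) :
    Trek E K i j ∨ UnshieldedColliderTrek E K i j := by
  obtain ⟨a, b, c, hia, hjb, hac, hbc, hc⟩ := h
  induction c using hE.wellFounded.induction generalizing i j a b with
  | _ c ih =>
  have adjacent : ∀ {i j a b}, Trek E K i a → Trek E K j b → E a c → E b c → E a b →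
      Trek E K i j ∨ UnshieldedColliderTrek E K i j := by
    intro i j a b hia hjb hac hbc hab
    rcases hjb.avoidingPath_or_parent with hbj | ⟨b', hjb', hb'b⟩
    · exact .inl ((hia.tail hab hjb.not_mem_right).trans_avoidingPath hbj)
    · exact ih b hbc _ _ hia hjb' hab hb'b (mem_ancSet_of_edge hbc hc)
  by_cases hab : a = b
  · subst hab
    rcases hia.avoidingPath_or_parent with hai | ⟨a₁, hia₁, ha₁⟩
    · exact .inl (hjb.trans_avoidingPath hai).symm
    rcases hjb.avoidingPath_or_parent with haj | ⟨a₂, hja₂, ha₂⟩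
    · exact .inl (hia.trans_avoidingPath haj)
    exact ih a hac _ _ hia₁ hja₂ ha₁ ha₂ (mem_ancSet_of_edge hac hc)
  by_cases hadj : E a b ∨ E b a
  · rcases hadj with hab' | hba
    · exact adjacent hia hjb hac hbc hab'
    · exact (adjacent hjb hia hbc hac hba).imp Trek.symm UnshieldedColliderTrek.symm
  · exact .inr ⟨a, b, c, hia, hjb, ⟨hac, hbc, hab, hadj⟩, hc⟩

def ReachesIn (E : Fin n → Fin n → Prop) (K : Set (Fin n)) : ℕ → Fin n → Prop
  | 0, c => c ∈ K
  | m + 1, c => ∃ d, E c d ∧ ReachesIn E K m d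

theorem exists_reachesIn_of_mem_ancSet {c : Fin n} (hc : c ∈ ancSet E K) :
    ∃ m, ReachesIn E K m c := by
  obtain ⟨k, hk, hck⟩ := hc
  induction hck using Relation.ReflTransGen.head_induction_on with
  | refl => exact ⟨0, hk⟩
  | head hcd _ ih =>
    obtain ⟨m, hm⟩ := ih
    exact ⟨m + 1, _, hcd, hm⟩

/-- Follow a shortest `E`-path from the collider into `K`. While `F` agrees with it, the
collider slides down it; the first edge reversed in `F` would give `a` a shorter path. -/
theorem colliderTrek_of_common_parent (hE : IsAcyclic E) (hEF : MarkovEquiv E F) :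
    ∀ (r : ℕ) {c a : Fin n}, ReachesIn E K r c → (∀ m ≤ r, ¬ReachesIn E K m a) → E a c →
      F a c → Trek F K i a → Trek F K j a → ColliderTrek F K i j
  | 0, c, a, hc, _, _, hac', hia, hja => ⟨a, a, c, hia, hja, hac', hac', c, hc, .refl⟩
  | r + 1, c, a, ⟨d, hcd, hd⟩, hmin, hac, hac', hia, hja => by
    rcases (hEF.1 c d).1 (.inl hcd) with hcd' | hdc'
    · have hcK : c ∉ K := fun hcK => hmin 1 (by omega) ⟨c, hac, hcK⟩
      exact colliderTrek_of_common_parent hE hEF r hd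
        (fun m hm hcm => hmin (m + 1) (by omega) ⟨c, hac, hcm⟩) hcd hcd'
        (hia.tail hac' hcK) (hja.tail hac' hcK)
    · exact absurd ⟨d, hEF.edge_of_reversed_edge hE hac hac' hcd hdc', hd⟩ (hmin (r + 1) le_rfl)

/-- As above; while the edges of the path are reversed in `F`, the collider stays
unshielded and moves down the path with the same parents. -/
theorem colliderTrek_of_unshielded (hE : IsAcyclic E) (hEF : MarkovEquiv E F) :
    ∀ (r : ℕ) {c a b : Fin n}, ReachesIn E K r c → (∀ m < r, ¬ReachesIn E K m c) →
      UnshieldedCollider E a c b → Trek F K i a → Trek F K j b → ColliderTrek F K i j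
  | 0, c, a, b, hc, _, hu, hia, hjb =>
    have hu' := (hEF.2 a c b).1 hu
    ⟨a, b, c, hia, hjb, hu'.1, hu'.2.1, c, hc, .refl⟩
  | r + 1, c, a, b, ⟨d, hcd, hd⟩, hmin, hu, hia, hjb => by
    have hcK : c ∉ K := fun hcK => hmin 0 (by omega) hcK
    have hu' := (hEF.2 a c b).1 hu
    rcases (hEF.1 c d).1 (.inl hcd) with hcd' | hdc'
    · exact colliderTrek_of_common_parent hE hEF r hd (fun m hm => hmin m (by omega)) hcd hcd'
        (hia.tail hu'.1 hcK) (hjb.tail hu'.2.1 hcK)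
    · have had := hEF.edge_of_reversed_edge hE hu.1 hu'.1 hcd hdc'
      have hbd := hEF.edge_of_reversed_edge hE hu.2.1 hu'.2.1 hcd hdc'
      exact colliderTrek_of_unshielded hE hEF r hd
        (fun m hm hdm => hmin (m + 1) (by omega) ⟨d, hcd, hdm⟩) ⟨had, hbd, hu.2.2⟩ hia hjb

theorem UnshieldedColliderTrek.colliderTrek_of_markovEquiv (hE : IsAcyclic E)
    (hEF : MarkovEquiv E F) (h : UnshieldedColliderTrek E K i j) : ColliderTrek F K i j := by
  classical
  obtain ⟨a, b, c, hia, hjb, hu, hc⟩ := h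
  have hr := exists_reachesIn_of_mem_ancSet hc
  exact colliderTrek_of_unshielded hE hEF (Nat.find hr) (Nat.find_spec hr)
    (fun m hm => Nat.find_min hr hm) hu (hia.of_markovEquiv hE hEF) (hjb.of_markovEquiv hE hEF)

end ColliderTransfer

theorem StarConn.of_markovEquiv {n : ℕ} {E F : Fin n → Fin n → Prop} {K : Set (Fin n)}
    {i j : Fin n} (hE : IsAcyclic E) (hF : IsAcyclic F) (hEF : MarkovEquiv E F) (hij : i ≠ j)
    (hi : i ∉ K) (hj : j ∉ K) (h : StarConn E K i j) : StarConn F K i j := by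
  rw [starConn_iff hF hij hi hj]
  rcases (starConn_iff hE hij hi hj).1 h with ht | hc
  · exact .inl (ht.of_markovEquiv hE hEF)
  rcases hc.trek_or_unshielded hE with ht | hu
  · exact .inl (ht.of_markovEquiv hE hEF)
  · exact .inr (hu.colliderTrek_of_markovEquiv hE hEF)

/-- If two DAGs `E` and `F` have the same skeleton and the same
unshielded colliders, then for every conditioning set `K` and every pair of vertices
`i, j ∉ K`, there is a *-connecting path between `i` and `j` given `K` in `E` iff
there is one in `F`. -/
theorem starConn_invariant {n : ℕ} (E F : Fin n → Fin n → Prop)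
    (hE : ∀ i, ¬ Relation.TransGen E i i) (hF : ∀ i, ¬ Relation.TransGen F i i)
    (hskel : SameSkeleton E F)
    (huc : ∀ i k j, UnshieldedCollider E i k j ↔ UnshieldedCollider F i k j)
    (K : Set (Fin n)) (i j : Fin n) (hij : i ≠ j) (hi : i ∉ K) (hj : j ∉ K) :
    StarConn E K i j ↔ StarConn F K i j :=
  ⟨StarConn.of_markovEquiv hE hF ⟨hskel, huc⟩ hij hi hj,
    StarConn.of_markovEquiv hF hE (MarkovEquiv.symm ⟨hskel, huc⟩) hij hi hj⟩
end

section
/- Tropical trek rule: for a DAG G on [n] and nonnegative coefficient matrix C supported on G, the tropical covariance matrix Σ^trop = C* ⊙ (C*)^T satisfies Σ^trop_{ij} = max over all treks τ from i to j of the product of the edge weights c_{ℓm} over all edges m → ℓ of τ. -/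
open Finset

noncomputable def pathWeight {n : ℕ} (C : Matrix (Fin n) (Fin n) NNReal) :
    List (Fin n) → NNReal
  | [] => 1
  | [_] => 1
  | a :: b :: rest => C b a * pathWeight C (b :: rest)

/-- The tropical covariance matrix `Σ^trop = C* ⊙ (C*)ᵀ`. -/
noncomputable def tropCov {n : ℕ} (C : Matrix (Fin n) (Fin n) NNReal) :
    Matrix (Fin n) (Fin n) NNReal :=
  tropMul (kleene C) (Matrix.transpose (kleene C))

/-! A coefficient `(C^{⊙k})_{il}` is the largest weight of a directed walk with `k` edges from
`l` to `i`. In a DAG walks are paths, so they have at most `n - 1` edges and `C*_{il}` is the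
largest weight of a path from `l` to `i`; maximising `C*_{il} · C*_{jl}` over the top vertex `l`
is then maximising over treks. -/

theorem nodup_of_isChain_of_acyclic {α : Type*} {E : α → α → Prop}
    (hacyc : ∀ a, ¬ Relation.TransGen E a a) {p : List α} (hp : p.IsChain E) : p.Nodup :=
  (List.isChain_iff_pairwise.mp (hp.imp fun _ _ => Relation.TransGen.single)).imp
    fun {a b} (h : Relation.TransGen E a b) (hab : a = b) => hacyc b (hab ▸ h)

section Weights

variable {n : ℕ} (C : Matrix (Fin n) (Fin n) NNReal)

theorem pathWeight_concat {p : List (Fin n)} {m : Fin n} (hp : p.getLast? = some m) (b : Fin n) :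
    pathWeight C (p ++ [b]) = pathWeight C p * C b m := by
  induction p with
  | nil => simp at hp
  | cons a l ih =>
    cases l with
    | nil =>
      obtain rfl : a = m := by simpa using hp
      simp [pathWeight, mul_comm]
    | cons c l =>
      rw [List.getLast?_cons_cons] at hp
      change C c a * pathWeight C (c :: l ++ [b]) = C c a * pathWeight C (c :: l) * C b m
      rw [ih hp, mul_assoc]

theorem pathWeight_le_tropPow {p : List (Fin n)} {a b : Fin n} (ha : p.head? = some a)
    (hb : p.getLast? = some b) : pathWeight C p ≤ tropPow C (p.length - 1) b a := by
  induction p using List.reverseRecOn generalizing b with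
  | nil => simp at ha
  | append_singleton l x ih =>
    obtain rfl : x = b := by simpa using hb
    rcases l.eq_nil_or_concat' with rfl | ⟨l', m, rfl⟩
    · obtain rfl : x = a := by simpa using ha
      simp [pathWeight, tropPow]
    · have hm : (l' ++ [m]).getLast? = some m := List.getLast?_concat
      have ha' : (l' ++ [m]).head? = some a := by simpa [List.head?_append] using ha
      have hlen : (l' ++ [m] ++ [x]).length - 1 = (l' ++ [m]).length - 1 + 1 := by simp
      calc pathWeight C (l' ++ [m] ++ [x])
          = C x m * pathWeight C (l' ++ [m]) := by rw [pathWeight_concat C hm, mul_comm]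
        _ ≤ C x m * tropPow C ((l' ++ [m]).length - 1) m a := by gcongr; exact ih ha' hm
        _ ≤ tropPow C ((l' ++ [m] ++ [x]).length - 1) x a := by
          rw [hlen]
          exact le_sup (f := fun m => C x m * tropPow C _ m a) (mem_univ m)

variable {E : Fin n → Fin n → Prop}

theorem exists_isChain_pathWeight_eq_tropPow (hsupp : ∀ i j, C i j ≠ 0 → E j i) (k : ℕ)
    {i l : Fin n} (h : tropPow C k i l ≠ 0) :
    ∃ p : List (Fin n), p.IsChain E ∧ p.head? = some l ∧ p.getLast? = some i ∧
      pathWeight C p = tropPow C k i l := by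
  induction k generalizing i with
  | zero =>
    obtain rfl : i = l := by simpa [tropPow] using h
    exact ⟨[i], List.isChain_singleton i, rfl, rfl, by simp [pathWeight, tropPow]⟩
  | succ k ih =>
    obtain ⟨m, -, hm⟩ := exists_mem_eq_sup univ ⟨i, mem_univ i⟩ fun m => C i m * tropPow C k m l
    change tropPow C (k + 1) i l = C i m * tropPow C k m l at hm
    obtain ⟨hCim, hkml⟩ := mul_ne_zero_iff.mp (hm ▸ h)
    obtain ⟨p, hp, hpl, hpm, hw⟩ := ih hkml
    refine ⟨p ++ [i], ?_, ?_, List.getLast?_concat, ?_⟩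
    · refine hp.append (List.isChain_singleton i) fun x hx y hy => ?_
      obtain rfl : m = x := by simpa [hpm] using hx
      obtain rfl : i = y := by simpa using hy
      exact hsupp i m hCim
    · simp [List.head?_append, hpl]
    · rw [pathWeight_concat C hpm, hw, hm, mul_comm]

theorem pathWeight_le_kleene (hacyc : ∀ i, ¬ Relation.TransGen E i i) {p : List (Fin n)}
    (hp : p.IsChain E) {a b : Fin n} (ha : p.head? = some a) (hb : p.getLast? = some b) :
    pathWeight C p ≤ kleene C b a := by
  have hlen : p.length ≤ n := by
    simpa using (nodup_of_isChain_of_acyclic hacyc hp).length_le_card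
  have hpos : 0 < p.length := List.length_pos_iff.mpr (List.ne_nil_of_mem (List.mem_of_head? ha))
  exact (pathWeight_le_tropPow C ha hb).trans
    (le_sup (f := fun k => tropPow C k b a) (mem_range.mpr (by omega)))

theorem exists_isChain_pathWeight_eq_kleene (hsupp : ∀ i j, C i j ≠ 0 → E j i) {i l : Fin n}
    (h : kleene C i l ≠ 0) :
    ∃ p : List (Fin n), p.IsChain E ∧ p.head? = some l ∧ p.getLast? = some i ∧
      pathWeight C p = kleene C i l := by
  obtain ⟨k, -, hk⟩ := exists_mem_eq_sup (range n) ⟨0, mem_range.mpr i.pos⟩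
    fun k => tropPow C k i l
  change kleene C i l = tropPow C k i l at hk
  rw [hk] at h ⊢
  exact exists_isChain_pathWeight_eq_tropPow C hsupp k h

def trekWeights (E : Fin n → Fin n → Prop) (i j : Fin n) : Set NNReal :=
  { w | ∃ p q : List (Fin n), p.IsChain E ∧ q.IsChain E ∧ p ≠ [] ∧ q ≠ [] ∧ p.head? = q.head? ∧
      p.getLast? = some i ∧ q.getLast? = some j ∧ w = pathWeight C p * pathWeight C q }

theorem tropCov_mem_upperBounds_trekWeights (hacyc : ∀ i, ¬ Relation.TransGen E i i)
    (i j : Fin n) : tropCov C i j ∈ upperBounds (trekWeights C E i j) := by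
  rintro _ ⟨p, q, hp, hq, hpne, -, htop, hi, hj, rfl⟩
  obtain ⟨a, ha⟩ := Option.ne_none_iff_exists'.mp (mt List.head?_eq_none_iff.mp hpne)
  calc pathWeight C p * pathWeight C q ≤ kleene C i a * kleene C j a :=
        mul_le_mul' (pathWeight_le_kleene C hacyc hp ha hi)
          (pathWeight_le_kleene C hacyc hq (htop ▸ ha) hj)
    _ ≤ tropCov C i j := le_sup (f := fun l => kleene C i l * kleene C j l) (mem_univ a)

theorem tropCov_le_sSup_trekWeights (hacyc : ∀ i, ¬ Relation.TransGen E i i)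
    (hsupp : ∀ i j, C i j ≠ 0 → E j i) (i j : Fin n) :
    tropCov C i j ≤ sSup (trekWeights C E i j) := by
  refine Finset.sup_le (f := fun l => kleene C i l * kleene C j l) fun l _ => ?_
  rcases eq_or_ne (kleene C i l * kleene C j l) 0 with h0 | h0
  · exact h0 ▸ zero_le
  obtain ⟨hil, hjl⟩ := mul_ne_zero_iff.mp h0
  obtain ⟨p, hp, hpl, hpi, hpw⟩ := exists_isChain_pathWeight_eq_kleene C hsupp hil
  obtain ⟨q, hq, hql, hqj, hqw⟩ := exists_isChain_pathWeight_eq_kleene C hsupp hjl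
  exact le_csSup ⟨_, tropCov_mem_upperBounds_trekWeights C hacyc i j⟩
    ⟨p, q, hp, hq, List.ne_nil_of_mem (List.mem_of_head? hpl),
      List.ne_nil_of_mem (List.mem_of_head? hql), hpl.trans hql.symm, hpi, hqj, by rw [hpw, hqw]⟩

end Weights

/-- **Tropical trek rule.** For `C` supported on a DAG `E`, the entry
`Σ^trop_{ij}` of `Σ^trop = C* ⊙ (C*)ᵀ` is the maximum, over all treks `τ` from `i` to `j`
(pairs of directed paths `p, q` from a common top vertex to `i` and to `j` respectively),
of the trek monomial: the product of the coefficients `c_{ℓm}` over the edges `m → ℓ` of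
the trek. -/
theorem tropical_trek_rule {n : ℕ} (E : Fin n → Fin n → Prop)
    (hacyc : ∀ i, ¬ Relation.TransGen E i i)
    (C : Matrix (Fin n) (Fin n) NNReal)
    (hsupp : ∀ i j, C i j ≠ 0 → E j i) (i j : Fin n) :
    tropCov C i j =
      sSup { w : NNReal | ∃ p q : List (Fin n),
        p.Chain' E ∧ q.Chain' E ∧ p ≠ [] ∧ q ≠ [] ∧ p.head? = q.head? ∧
        p.getLast? = some i ∧ q.getLast? = some j ∧
        w = pathWeight C p * pathWeight C q } :=
  le_antisymm (tropCov_le_sSup_trekWeights C hacyc hsupp i j)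
    (csSup_le' (tropCov_mem_upperBounds_trekWeights C hacyc i j))
end

section
/- For the Cassiopeia graph with edges 1→4, 2→4, 2→5, 3→5 and strictly positive edge weights c_{41}, c_{42}, c_{52}, c_{53}, the 3×3 submatrix of Σ^trop with rows {1,4,5} and columns {3,4,5} has tropical determinant achieved uniquely by the permutation giving c_{41} c_{42} c_{52} c_{53}, hence is tropically nonsingular and has tropical rank 3, for every choice of positive coefficients. -/
open Finset

/-- The tropical determinant. -/
noncomputable def tdet {k : ℕ} (A : Matrix (Fin k) (Fin k) NNReal) : NNReal :=
  univ.sup fun σ : Equiv.Perm (Fin k) => ∏ i, A i (σ i)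

/-- Coefficient matrix of the Cassiopeia graph (vertices `1,…,5` are `0,…,4`;
edges `1→4, 2→4, 2→5, 3→5` with weights `c41, c42, c52, c53`). -/
noncomputable def cassC (c41 c42 c52 c53 : NNReal) : Matrix (Fin 5) (Fin 5) NNReal :=
  !![0, 0, 0, 0, 0;
     0, 0, 0, 0, 0;
     0, 0, 0, 0, 0;
     c41, c42, 0, 0, 0;
     0, c52, c53, 0, 0]

lemma sup5F (f : Fin 5 → NNReal) : univ.sup f = f 0 ⊔ (f 1 ⊔ (f 2 ⊔ (f 3 ⊔ f 4))) := by
  rw [show (univ : Finset (Fin 5)) = {0,1,2,3,4} from rfl]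
  simp [Finset.sup_insert]
lemma sup5R (f : ℕ → NNReal) : (Finset.range 5).sup f = f 0 ⊔ (f 1 ⊔ (f 2 ⊔ (f 3 ⊔ f 4))) := by
  rw [show Finset.range 5 = {0,1,2,3,4} from rfl]
  simp [Finset.sup_insert]

lemma kleene_cass (c41 c42 c52 c53 : NNReal) :
    kleene (cassC c41 c42 c52 c53) =
    !![1, 0, 0, 0, 0;
       0, 1, 0, 0, 0;
       0, 0, 1, 0, 0;
       c41, c42, 0, 1, 0;
       0, c52, c53, 0, 1] := by
  ext i j
  fin_cases i <;> fin_cases j <;>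
    simp [kleene, tropPow, tropMul, cassC, sup5F, sup5R]


set_option maxHeartbeats 1000000 in
lemma cov_cass (c41 c42 c52 c53 : NNReal) :
    tropCov (cassC c41 c42 c52 c53) =
    !![1, 0, 0, c41, 0;
       0, 1, 0, c42, c52;
       0, 0, 1, 0, c53;
       c41, c42, 0, c41*c41 ⊔ (c42*c42 ⊔ 1), c42*c52;
       0, c52, c53, c42*c52, c52*c52 ⊔ (c53*c53 ⊔ 1)] := by
  ext i j
  simp only [tropCov, tropMul, Matrix.transpose_apply, kleene_cass, sup5F]
  fin_cases i <;> fin_cases j <;> simp [mul_comm]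

lemma subm_cass (c41 c42 c52 c53 : NNReal) :
    (tropCov (cassC c41 c42 c52 c53)).submatrix ![0, 3, 4] ![2, 3, 4] =
    !![0, c41, 0;
       0, c41*c41 ⊔ (c42*c42 ⊔ 1), c42*c52;
       c53, c42*c52, c52*c52 ⊔ (c53*c53 ⊔ 1)] := by
  rw [cov_cass]
  ext i j
  fin_cases i <;> fin_cases j <;> rfl

lemma perm3 : ∀ σ : Equiv.Perm (Fin 3), σ = 1 ∨ σ = Equiv.swap 0 1 ∨ σ = Equiv.swap 0 2 ∨
    σ = Equiv.swap 1 2 ∨ σ = Equiv.swap 0 1 * Equiv.swap 1 2 ∨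
    σ = Equiv.swap 1 2 * Equiv.swap 0 1 := by decide

lemma tdet_M (a b c d e : NNReal) :
    tdet !![0, a, 0; 0, b, c; d, c, e] = a * c * d := by
  have : (univ : Finset (Equiv.Perm (Fin 3))) =
      {1, Equiv.swap 0 1, Equiv.swap 0 2, Equiv.swap 1 2,
       Equiv.swap 0 1 * Equiv.swap 1 2, Equiv.swap 1 2 * Equiv.swap 0 1} := by decide
  rw [tdet, this]
  simp [Finset.sup_insert, Fin.prod_univ_three, Equiv.swap_apply_def, mul_comm, mul_left_comm]

set_option maxHeartbeats 1000000 in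
/-- For the Cassiopeia graph with strictly positive edge weights, the
`3×3` submatrix of `Σ^trop` with rows `{1,4,5}` and columns `{3,4,5}` has tropical
determinant achieved by a unique permutation, giving the value `c41 c42 c52 c53`; hence
it is tropically nonsingular and has tropical rank 3, for every choice of positive
coefficients. -/
theorem cassiopeia_no_rank_drop (c41 c42 c52 c53 : NNReal)
    (h41 : 0 < c41) (h42 : 0 < c42) (h52 : 0 < c52) (h53 : 0 < c53) :
    (∃! σ : Equiv.Perm (Fin 3),
        (∏ i, (tropCov (cassC c41 c42 c52 c53)).submatrix ![0, 3, 4] ![2, 3, 4] i (σ i)) =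
          tdet ((tropCov (cassC c41 c42 c52 c53)).submatrix ![0, 3, 4] ![2, 3, 4])) ∧
    tdet ((tropCov (cassC c41 c42 c52 c53)).submatrix ![0, 3, 4] ![2, 3, 4]) =
      c41 * c42 * c52 * c53 := by
  rw [subm_cass]
  have hd : tdet !![0, c41, 0;
       0, c41*c41 ⊔ (c42*c42 ⊔ 1), c42*c52;
       c53, c42*c52, c52*c52 ⊔ (c53*c53 ⊔ 1)] = c41 * c42 * c52 * c53 := by
    rw [tdet_M]; ring
  have hv : (0:NNReal) < c41 * c42 * c52 * c53 := by positivity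
  refine ⟨⟨Equiv.swap 0 1 * Equiv.swap 1 2, ?_, ?_⟩, hd⟩
  · rw [hd]
    simp only [Fin.prod_univ_three]
    simp [Equiv.Perm.coe_mul, Equiv.swap_apply_def]
    exact Or.inl (by ring)
  · intro σ hσ
    rw [hd] at hσ
    rcases perm3 σ with h | h | h | h | h | h <;> subst h <;>
      [skip; skip; skip; skip; rfl; skip] <;>
      rw [Fin.prod_univ_three] at hσ
    case inl =>
      simp [h41.ne', h42.ne', h52.ne', h53.ne'] at hσ
    case inr.inl =>
      rw [show ((Equiv.swap 0 1 : Equiv.Perm (Fin 3)) 0) = 1 from by decide,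
          show ((Equiv.swap 0 1 : Equiv.Perm (Fin 3)) 1) = 0 from by decide,
          show ((Equiv.swap 0 1 : Equiv.Perm (Fin 3)) 2) = 2 from by decide] at hσ
      simp [h41.ne', h42.ne', h52.ne', h53.ne'] at hσ
    case inr.inr.inl =>
      rw [show ((Equiv.swap 0 2 : Equiv.Perm (Fin 3)) 0) = 2 from by decide,
          show ((Equiv.swap 0 2 : Equiv.Perm (Fin 3)) 1) = 1 from by decide,
          show ((Equiv.swap 0 2 : Equiv.Perm (Fin 3)) 2) = 0 from by decide] at hσ
      simp [h41.ne', h42.ne', h52.ne', h53.ne'] at hσ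
    case inr.inr.inr.inl =>
      rw [show ((Equiv.swap 1 2 : Equiv.Perm (Fin 3)) 0) = 0 from by decide,
          show ((Equiv.swap 1 2 : Equiv.Perm (Fin 3)) 1) = 2 from by decide,
          show ((Equiv.swap 1 2 : Equiv.Perm (Fin 3)) 2) = 1 from by decide] at hσ
      simp [h41.ne', h42.ne', h52.ne', h53.ne'] at hσ
    case inr.inr.inr.inr =>
      rw [show ((Equiv.swap 1 2 * Equiv.swap 0 1 : Equiv.Perm (Fin 3)) 0) = 2 from by decide,
          show ((Equiv.swap 1 2 * Equiv.swap 0 1 : Equiv.Perm (Fin 3)) 1) = 0 from by decide,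
          show ((Equiv.swap 1 2 * Equiv.swap 0 1 : Equiv.Perm (Fin 3)) 2) = 1 from by decide] at hσ
      simp [h41.ne', h42.ne', h52.ne', h53.ne'] at hσ
end

section
/- In the Cassiopeia graph (edges 1→4, 2→4, 2→5, 3→5), the set K = {4,5} d-connects 1 and 3 (via the path 1→4←2→5←3 whose colliders 4, 5 are both in K), but K *-separates 1 and 3, since every path between 1 and 3 in the graph contains at least two colliders or a non-collider in K. -/
/-- The Cassiopeia DAG on `{1,…,5}` (here `0,…,4`) with edges
`1→4, 2→4, 2→5, 3→5`. -/
def cassE : Fin 5 → Fin 5 → Prop := fun a b =>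
  (a = 0 ∧ b = 3) ∨ (a = 1 ∧ b = 3) ∨ (a = 1 ∧ b = 4) ∨ (a = 2 ∧ b = 4)

/-! Vertices `1` and `3` have the single neighbours `4` and `5`, and both lie in `K`. A path
from `1` to `3` therefore starts `1 — 4` and ends `5 — 3`; since a non-collider in `K` blocks it,
`4` and `5` must both be colliders on a d-connecting path, which then has two colliders. -/

instance (a b : Fin 5) : Decidable (cassE a b) := by
  unfold cassE; infer_instance

section General

variable {n : ℕ} {E : Fin n → Fin n → Prop} {K : Set (Fin n)} {p : List (Fin n)}

lemma subset_ancSet : K ⊆ ancSet E K := fun k hk => ⟨k, hk, .refl⟩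

lemma dConnecting_of_colliders_mem (hw : IsWalk E p)
    (h : ∀ a b c, [a, b, c] <:+: p →
      (E a b ∧ E c b → b ∈ K) ∧ (¬(E a b ∧ E c b) → b ∉ K)) :
    DConnecting E K p :=
  ⟨hw, fun a b c habc => ⟨fun hcol => subset_ancSet ((h a b c habc).1 hcol), (h a b c habc).2⟩⟩

lemma DConnecting.collider_of_mem {a b c : Fin n} (hp : DConnecting E K p)
    (habc : [a, b, c] <:+: p) (hb : b ∈ K) : E a b ∧ E c b := by
  by_contra hcol
  exact (hp.2 a b c habc).2 hcol hb

lemma IsWalk.reverse (hw : IsWalk E p) : IsWalk E p.reverse :=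
  List.isChain_reverse.mpr (hw.imp fun _ _ h => h.symm)

lemma IsWalk.exists_eq_cons_cons {i : Fin n} (hw : IsWalk E p) (hh : p.head? = some i)
    (hlen : 2 ≤ p.length) : ∃ b r, p = i :: b :: r ∧ (E i b ∨ E b i) := by
  match p, hh, hlen with
  | i' :: b :: r, hh, _ =>
    obtain rfl : i' = i := by simpa using hh
    exact ⟨b, r, rfl, (List.isChain_cons_cons.mp hw).1⟩

lemma IsWalk.exists_eq_append_pair {j : Fin n} (hw : IsWalk E p) (hl : p.getLast? = some j)
    (hlen : 2 ≤ p.length) : ∃ s y, p = s ++ [y, j] ∧ (E y j ∨ E j y) := by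
  obtain ⟨y, r, hr, hy⟩ := hw.reverse.exists_eq_cons_cons (by rwa [List.head?_reverse])
    (by rwa [List.length_reverse])
  refine ⟨r.reverse, y, ?_, hy.symm⟩
  simpa using congrArg List.reverse hr

lemma colliderCount_cons_le (x : Fin n) (p : List (Fin n)) :
    colliderCount E p ≤ colliderCount E (x :: p) := by
  match p with
  | [] | [_] => simp [colliderCount]
  | _ :: _ :: _ => simp only [colliderCount]; omega

lemma one_le_colliderCount {a b c : Fin n} (habc : [a, b, c] <:+: p) (hab : E a b)
    (hcb : E c b) : 1 ≤ colliderCount E p := by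
  induction p with
  | nil => simpa using habc.length_le
  | cons y l ih =>
    rcases List.infix_cons_iff.mp habc with ⟨t, ht⟩ | hl
    · simp [← ht, colliderCount, hab, hcb]
    · exact (ih hl).trans (colliderCount_cons_le y l)

lemma two_le_colliderCount {a b c x y z : Fin n} {r : List (Fin n)} (hab : E a b)
    (hcb : E c b) (hxyz : [x, y, z] <:+: b :: c :: r) (hxy : E x y) (hzy : E z y) :
    2 ≤ colliderCount E (a :: b :: c :: r) := by
  have := one_le_colliderCount hxyz hxy hzy
  simp only [colliderCount, hab, hcb, and_self, if_true]
  omega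

end General

lemma eq_three_of_cassE_adj_zero {z : Fin 5} : cassE 0 z ∨ cassE z 0 → z = 3 := by
  revert z; decide

lemma eq_four_of_cassE_adj_two {z : Fin 5} : cassE 2 z ∨ cassE z 2 → z = 4 := by
  revert z; decide

lemma cassiopeia_walk_shape {p : List (Fin 5)} (hw : IsWalk cassE p) (hh : p.head? = some 0)
    (hl : p.getLast? = some 2) (hlen : 2 ≤ p.length) :
    ∃ c t x, p = 0 :: 3 :: c :: t ∧ [x, 4, 2] <:+: 3 :: c :: t := by
  obtain ⟨b, r, rfl, hb⟩ := hw.exists_eq_cons_cons hh hlen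
  obtain ⟨s, y, hs, hy⟩ := hw.exists_eq_append_pair hl hlen
  obtain rfl := eq_three_of_cassE_adj_zero hb
  obtain rfl := eq_four_of_cassE_adj_two hy.symm
  match s, r with
  | [], _ => simp at hs
  | _ :: _, [] => simpa using congrArg List.length hs
  | _ :: s, c :: t =>
    obtain ⟨-, hs⟩ := List.cons_eq_cons.mp hs
    rcases s.eq_nil_or_concat with rfl | ⟨s, x, rfl⟩
    · simp at hs
    · exact ⟨c, t, x, rfl, s, [], by simp [hs]⟩

lemma cassiopeia_dConn : DConn cassE ({3, 4} : Set (Fin 5)) 0 2 := by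
  refine ⟨[0, 3, 1, 4, 2], rfl, rfl, by simp, dConnecting_of_colliders_mem ?_ (by decide)⟩
  show List.IsChain _ _
  decide

lemma cassiopeia_not_starConn : ¬ StarConn cassE ({3, 4} : Set (Fin 5)) 0 2 := by
  rintro ⟨p, hh, hl, hlen, hp, hcount⟩
  obtain ⟨c, t, x, rfl, hx⟩ := cassiopeia_walk_shape hp.1 hh hl hlen
  have h3 := hp.collider_of_mem (List.prefix_append [0, 3, c] t).isInfix (by simp)
  have h4 := hp.collider_of_mem (List.infix_cons hx) (by simp)
  have := two_le_colliderCount h3.1 h3.2 hx h4.1 h4.2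
  omega

/-- In the Cassiopeia graph, the set `K = {4,5}` d-connects `1` and
`3` (via the path `1→4←2→5←3` whose colliders `4, 5` lie in `K`), but `K` *-separates
`1` and `3`: no path between `1` and `3` is *-connecting given `K`. -/
theorem cassiopeia_dConnected_starSeparated :
    DConn cassE ({3, 4} : Set (Fin 5)) 0 2 ∧
    ¬ StarConn cassE ({3, 4} : Set (Fin 5)) 0 2 :=
  ⟨cassiopeia_dConn, cassiopeia_not_starConn⟩
end

section
/- If G and H are DAGs on [n] with the same skeleton and the same unshielded colliders, and π is a path in H between i and j containing a collider u → v ← w such that (u,v,w) is not a collider configuration in G, then u and w are adjacent in H; consequently π can be shortened by replacing u → v ← w with the edge between u and w. -/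
theorem List.head?_append_cons_congr {α : Type*} (s l l' : List α) (a : α) :
    (s ++ a :: l).head? = (s ++ a :: l').head? := by
  cases s <;> rfl

theorem List.getLast?_append_cons_cons_of_ne_nil {α : Type*} (s : List α) (a b : α)
    {l : List α} (hl : l ≠ []) :
    (s ++ a :: b :: l).getLast? = (s ++ a :: l).getLast? := by
  obtain ⟨c, t, rfl⟩ := List.exists_cons_of_ne_nil hl
  simp only [List.getLast?_append, List.getLast?_cons_cons]

theorem List.IsChain.bypass {α : Type*} {R : α → α → Prop} {s t : List α} {a b c : α}
    (h : (s ++ a :: b :: c :: t).IsChain R) (hac : R a c) :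
    (s ++ a :: c :: t).IsChain R := by
  rw [List.isChain_append] at h ⊢
  obtain ⟨hs, hmid, hjoin⟩ := h
  rw [List.isChain_cons_cons, List.isChain_cons_cons] at hmid
  exact ⟨hs, List.isChain_cons_cons.2 ⟨hac, hmid.2.2⟩, by simpa using hjoin⟩

theorem adj_of_collider_of_not_collider {n : ℕ} {E F : Fin n → Fin n → Prop}
    (huc : ∀ i k j, UnshieldedCollider F i k j → UnshieldedCollider E i k j)
    {u v w : Fin n} (huw : u ≠ w) (hcolF : F u v ∧ F w v) (hcolE : ¬(E u v ∧ E w v)) :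
    F u w ∨ F w u := by
  by_contra hna
  obtain ⟨huv, hwv, -⟩ := huc u v w ⟨hcolF.1, hcolF.2, huw, hna⟩
  exact hcolE ⟨huv, hwv⟩

theorem collider_shortcut_general {n : ℕ} (E F : Fin n → Fin n → Prop)
    (huc : ∀ i k j, UnshieldedCollider E i k j ↔ UnshieldedCollider F i k j)
    (i j u v w : Fin n) (s t : List (Fin n)) (huw : u ≠ w)
    (hwalk : IsWalk F (s ++ u :: v :: w :: t))
    (hhead : (s ++ u :: v :: w :: t).head? = some i)
    (hlast : (s ++ u :: v :: w :: t).getLast? = some j)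
    (hcolF : F u v ∧ F w v) (hcolE : ¬(E u v ∧ E w v)) :
    (F u w ∨ F w u) ∧ IsWalk F (s ++ u :: w :: t) ∧
      (s ++ u :: w :: t).head? = some i ∧ (s ++ u :: w :: t).getLast? = some j := by
  have hadj : F u w ∨ F w u :=
    adj_of_collider_of_not_collider (fun i k j => (huc i k j).2) huw hcolF hcolE
  refine ⟨hadj, List.IsChain.bypass hwalk hadj, ?_, ?_⟩
  · rwa [List.head?_append_cons_congr s (w :: t) (v :: w :: t)]
  · rwa [← List.getLast?_append_cons_cons_of_ne_nil s u v (List.cons_ne_nil w t)]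

/-- Let `E` and `F` be DAGs with the same skeleton and same
unshielded colliders, and let `p = s ++ [u,v,w] ++ t` be a path in `F` between `i` and
`j` on which `v` is a collider (`u → v ← w` in `F`, with `u ≠ w`) such that `(u,v,w)`
is not a collider configuration in `E`. Then `u` and `w` are adjacent in `F`, and `p`
can be shortened: replacing `u → v ← w` by the edge between `u` and `w` yields a walk
in `F` between `i` and `j`. -/
theorem collider_shortcut {n : ℕ} (E F : Fin n → Fin n → Prop)
    (hE : ∀ i, ¬ Relation.TransGen E i i) (hF : ∀ i, ¬ Relation.TransGen F i i)
    (hskel : SameSkeleton E F)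
    (huc : ∀ i k j, UnshieldedCollider E i k j ↔ UnshieldedCollider F i k j)
    (i j u v w : Fin n) (s t : List (Fin n)) (huw : u ≠ w)
    (hwalk : IsWalk F (s ++ u :: v :: w :: t))
    (hhead : (s ++ u :: v :: w :: t).head? = some i)
    (hlast : (s ++ u :: v :: w :: t).getLast? = some j)
    (hcolF : F u v ∧ F w v) (hcolE : ¬(E u v ∧ E w v)) :
    (F u w ∨ F w u) ∧ IsWalk F (s ++ u :: w :: t) ∧
      (s ++ u :: w :: t).head? = some i ∧ (s ++ u :: w :: t).getLast? = some j :=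
  collider_shortcut_general E F huc i j u v w s t huw hwalk hhead hlast hcolF hcolE
end
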